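/- (Integrability of the fundamental solution, first part.) For every fixed time T > 0 and every exponent p with 1 ≤ p < p_0 := (Q+2)/Q, the Kolmogorov kernel K belongs to L^p(ℝ^N × (0,T)), i.e. ∫_0^T ∫_{ℝ^N} K(x,t)^p dx dt < ∞. -/

import Mathlib

open MeasureTheory Matrix Filter

noncomputable section

/-- Partial sums of the block sizes. -/
def blockSum (m : ℕ → ℕ) (j : ℕ) : ℕ := ∑ j' ∈ Finset.range j, m j'

/-- The index of the block containing the `i`-th coordinate. -/
def blockIdx (m : ℕ → ℕ) (i : ℕ) : ℕ := sInf {j : ℕ | i < blockSum m (j + 1)}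

/-- The anisotropic dilation matrix `δ_N(r) = diag(r I_{m₀}, r³ I_{m₁}, …)`. -/
def dil (N : ℕ) (m : ℕ → ℕ) (r : ℝ) : Matrix (Fin N) (Fin N) ℝ :=
  Matrix.diagonal fun i => r ^ (2 * blockIdx m (i : ℕ) + 1)

/-- `E(t) = exp(-tB)`. -/
def Emat (N : ℕ) (B : Matrix (Fin N) (Fin N) ℝ) (t : ℝ) : Matrix (Fin N) (Fin N) ℝ :=
  NormedSpace.exp ((-t) • B)

/-- The matrix `A₀` with upper-left `m₀ × m₀` identity block and zeros elsewhere. -/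
def A0 (N m0 : ℕ) : Matrix (Fin N) (Fin N) ℝ :=
  Matrix.diagonal fun i => if (i : ℕ) < m0 then (1 : ℝ) else 0

/-- `C(t) = ∫₀ᵗ E(s) A₀ E(s)ᵀ ds` (entrywise integral). -/
def Cmat (N : ℕ) (B : Matrix (Fin N) (Fin N) ℝ) (m0 : ℕ) (t : ℝ) : Matrix (Fin N) (Fin N) ℝ :=
  Matrix.of fun i j => ∫ s in (0:ℝ)..t, (Emat N B s * A0 N m0 * (Emat N B s)ᵀ) i j

/-- The normalizing constant `C_N = (4π)^{-N/2} |det C(1)|^{-1/2}`. -/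
def CN (N : ℕ) (B : Matrix (Fin N) (Fin N) ℝ) (m0 : ℕ) : ℝ :=
  (4 * Real.pi) ^ (-(N : ℝ) / 2) * |(Cmat N B m0 1).det| ^ (-(1 : ℝ) / 2)

/-- The Kolmogorov kernel
`K(x,t) = C_N t^{-Q/2} exp(-(1/4)⟨C(1)⁻¹ δ_N(1/√t)x, δ_N(1/√t)x⟩)` for `t > 0`,
and `K(x,t) = 0` for `t ≤ 0`. -/
def Kker (N : ℕ) (m : ℕ → ℕ) (B : Matrix (Fin N) (Fin N) ℝ) (Q : ℕ)
    (x : Fin N → ℝ) (t : ℝ) : ℝ :=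
  if 0 < t then
    CN N B (m 0) * t ^ (-(Q : ℝ) / 2) *
      Real.exp (-(1 / 4) * (((Cmat N B (m 0) 1)⁻¹ *ᵥ (dil N m (1 / Real.sqrt t) *ᵥ x)) ⬝ᵥ
        (dil N m (1 / Real.sqrt t) *ᵥ x)))
  else 0

/-- The `i`-th spatial partial derivative `∂_{x_i} K(x,t)` of the kernel. -/
def DKker (N : ℕ) (m : ℕ → ℕ) (B : Matrix (Fin N) (Fin N) ℝ) (Q : ℕ) (i : Fin N)
    (x : Fin N → ℝ) (t : ℝ) : ℝ :=
  deriv (fun r => Kker N m B Q (Function.update x i r) t) (x i)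

/-- Group convolution on `ℝ^N × (0,T)`:
`(f*g)(x,t) = ∫₀ᵗ ∫_{ℝ^N} f(x - E(t-s)y, t-s) g(y,s) dy ds`. -/
def conv (N : ℕ) (B : Matrix (Fin N) (Fin N) ℝ) (f g : (Fin N → ℝ) × ℝ → ℝ) :
    (Fin N → ℝ) × ℝ → ℝ :=
  fun z => ∫ s in (0:ℝ)..z.2, ∫ y : Fin N → ℝ,
    f (z.1 - Emat N B (z.2 - s) *ᵥ y, z.2 - s) * g (y, s)

/-- Group convolution over all of `ℝ^{N+1}`:
`(f*g)(x,t) = ∫_ℝ ∫_{ℝ^N} f(x - E(t-s)y, t-s) g(y,s) dy ds`. -/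
def convAll (N : ℕ) (B : Matrix (Fin N) (Fin N) ℝ) (f g : (Fin N → ℝ) × ℝ → ℝ) :
    (Fin N → ℝ) × ℝ → ℝ :=
  fun z => ∫ s : ℝ, ∫ y : Fin N → ℝ,
    f (z.1 - Emat N B (z.2 - s) *ᵥ y, z.2 - s) * g (y, s)

/-! For fixed `t > 0` the substitution `y = δ_N(1/√t) x`, whose Jacobian is `t^{Q/2}`, turns
`∫ K(x,t)^p dx` into `C_N^p t^{Q(1-p)/2}` times the integral of the Gaussian
`exp(-(p/4)⟨C(1)⁻¹ y, y⟩)`, which is finite because `C(1)⁻¹` is positive definite. By Tonelli it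
remains to integrate `t^{Q(1-p)/2}` over `(0,T)`, which is possible exactly when
`Q(1-p)/2 > -1`, i.e. `p < (Q+2)/Q`. -/

section Dilation

lemma blockSum_mono (m : ℕ → ℕ) : Monotone (blockSum m) := fun _ _ h =>
  Finset.sum_le_sum_of_subset (Finset.range_subset_range.mpr h)

lemma blockSum_succ (m : ℕ → ℕ) (j : ℕ) : blockSum m (j + 1) = blockSum m j + m j :=
  Finset.sum_range_succ m j

lemma blockIdx_eq {m : ℕ → ℕ} {i j : ℕ} (h₁ : blockSum m j ≤ i) (h₂ : i < blockSum m (j + 1)) :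
    blockIdx m i = j := by
  refine le_antisymm (Nat.sInf_le h₂) (le_csInf ⟨j, h₂⟩ fun j' (hj' : i < _) => ?_)
  by_contra! hlt
  have := blockSum_mono m (show j' + 1 ≤ j by omega)
  omega

lemma sum_range_blockSum (m : ℕ → ℕ) (k : ℕ) :
    ∑ i ∈ Finset.range (blockSum m k), (2 * blockIdx m i + 1) =
      ∑ j ∈ Finset.range k, (2 * j + 1) * m j := by
  induction k with
  | zero => simp [blockSum]
  | succ k ih =>
    have hblock : ∑ i ∈ Finset.Ico (blockSum m k) (blockSum m (k + 1)), (2 * blockIdx m i + 1) =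
        (2 * k + 1) * m k := by
      rw [Finset.sum_congr rfl fun i hi => by
          rw [blockIdx_eq (Finset.mem_Ico.1 hi).1 (Finset.mem_Ico.1 hi).2],
        Finset.sum_const, Nat.card_Ico, smul_eq_mul, blockSum_succ, Nat.add_sub_cancel_left,
        mul_comm]
    rw [Finset.sum_range_succ, ← ih, ← hblock, Finset.range_eq_Ico, Finset.range_eq_Ico,
      Finset.sum_Ico_consecutive _ (Nat.zero_le _) (blockSum_mono m k.le_succ)]

lemma det_dil (N : ℕ) (m : ℕ → ℕ) (r : ℝ) :
    (dil N m r).det = r ^ ∑ i ∈ Finset.range N, (2 * blockIdx m i + 1) := by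
  rw [dil, det_diagonal, Finset.prod_pow_eq_pow_sum, ← Fin.sum_univ_eq_sum_range]

lemma det_dil_of_blockSum_eq {N : ℕ} {m : ℕ → ℕ} {k : ℕ} (hk : blockSum m k = N) (r : ℝ) :
    (dil N m r).det = r ^ ∑ j ∈ Finset.range k, (2 * j + 1) * m j := by
  rw [det_dil, ← hk, sum_range_blockSum]

lemma det_dil_ne_zero (N : ℕ) (m : ℕ → ℕ) {r : ℝ} (hr : r ≠ 0) : (dil N m r).det ≠ 0 := by
  rw [det_dil]
  exact pow_ne_zero _ hr

lemma continuous_dil (N : ℕ) (m : ℕ → ℕ) : Continuous (dil N m) :=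
  Continuous.matrix_diagonal (by fun_prop)

end Dilation

section ChangeOfVariables

variable {ι : Type*} [Fintype ι] [DecidableEq ι] {A : Matrix ι ι ℝ}
  {E : Type*} [NormedAddCommGroup E]

lemma measurableEmbedding_mulVec (hA : A.det ≠ 0) : MeasurableEmbedding (A *ᵥ ·) :=
  (LinearEquiv.ofIsUnitDet (f := toLin' A) (v := Pi.basisFun ℝ ι) (v' := Pi.basisFun ℝ ι)
    (by simpa using hA.isUnit)).toContinuousLinearEquiv.toHomeomorph.measurableEmbedding

lemma map_mulVec_volume (hA : A.det ≠ 0) :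
    Measure.map (A *ᵥ ·) volume = ENNReal.ofReal |A.det|⁻¹ • (volume : Measure (ι → ℝ)) := by
  rw [← abs_inv]
  exact Real.map_matrix_volume_pi_eq_smul_volume_pi hA

lemma integrable_comp_mulVec_iff (hA : A.det ≠ 0) {f : (ι → ℝ) → E} :
    Integrable (fun x => f (A *ᵥ x)) ↔ Integrable f := by
  rw [← Function.comp_def, ← (measurableEmbedding_mulVec hA).integrable_map_iff,
    map_mulVec_volume hA, integrable_smul_measure (by simpa using hA) ENNReal.ofReal_ne_top]

lemma integral_comp_mulVec [NormedSpace ℝ E] (hA : A.det ≠ 0) (f : (ι → ℝ) → E) :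
    ∫ x, f (A *ᵥ x) = |A.det|⁻¹ • ∫ y, f y := by
  rw [← (measurableEmbedding_mulVec hA).integral_map, map_mulVec_volume hA, integral_smul_measure,
    ENNReal.toReal_ofReal (by positivity)]

end ChangeOfVariables

section Gaussian
variable {ι : Type*} [Fintype ι] {b : ℝ}

lemma integrable_exp_neg_mul_dotProduct_self (hb : 0 < b) :
    Integrable fun x : ι → ℝ => Real.exp (-(b * (x ⬝ᵥ x))) := by
  have h : Integrable fun x : ι → ℝ => ∏ i, Real.exp (-b * x i ^ 2) :=
    Integrable.fintype_prod (f := fun _ y => Real.exp (-b * y ^ 2))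
      fun _ => integrable_exp_neg_mul_sq hb
  refine h.congr (ae_of_all _ fun x => ?_)
  simp only [← Real.exp_sum, dotProduct, Finset.mul_sum, sq, neg_mul, Finset.sum_neg_distrib]

open scoped MatrixOrder in
lemma Matrix.PosDef.integrable_exp_neg_mul_quadForm [DecidableEq ι] {M : Matrix ι ι ℝ}
    (hM : M.PosDef) (hb : 0 < b) :
    Integrable fun x : ι → ℝ => Real.exp (-(b * ((M *ᵥ x) ⬝ᵥ x))) := by
  obtain ⟨A, rfl⟩ := CStarAlgebra.nonneg_iff_eq_star_mul_self.mp hM.posSemidef.nonneg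
  have hA : A.det ≠ 0 := by
    have := hM.det_pos
    rw [star_eq_conjTranspose, det_mul, det_conjTranspose] at this
    intro h; simp [h] at this
  have hquad : ∀ x, ((star A * A) *ᵥ x) ⬝ᵥ x = (A *ᵥ x) ⬝ᵥ (A *ᵥ x) := fun x => by
    rw [← mulVec_mulVec, star_eq_conjTranspose, conjTranspose_eq_transpose_of_trivial,
      dotProduct_comm, dotProduct_mulVec, vecMul_transpose]
  simp_rw [hquad]
  exact (integrable_comp_mulVec_iff hA).2 (integrable_exp_neg_mul_dotProduct_self hb)

end Gaussian

section Kernel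

variable {N : ℕ} {m : ℕ → ℕ} {B : Matrix (Fin N) (Fin N) ℝ} {Q : ℕ}

lemma CN_nonneg (N : ℕ) (B : Matrix (Fin N) (Fin N) ℝ) (m₀ : ℕ) : 0 ≤ CN N B m₀ := by
  unfold CN; positivity

lemma Kker_of_pos {t : ℝ} (ht : 0 < t) (x : Fin N → ℝ) :
    Kker N m B Q x t = CN N B (m 0) * t ^ (-(Q : ℝ) / 2) *
      Real.exp (-(1 / 4) * (((Cmat N B (m 0) 1)⁻¹ *ᵥ (dil N m (1 / Real.sqrt t) *ᵥ x)) ⬝ᵥ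
        (dil N m (1 / Real.sqrt t) *ᵥ x))) :=
  if_pos ht

lemma Kker_nonneg (x : Fin N → ℝ) (t : ℝ) : 0 ≤ Kker N m B Q x t := by
  unfold Kker
  split_ifs
  · have := CN_nonneg N B (m 0); positivity
  · exact le_rfl

lemma continuousOn_Kker :
    ContinuousOn (fun z : (Fin N → ℝ) × ℝ => Kker N m B Q z.1 z.2) (Set.univ ×ˢ Set.Ioi 0) := by
  have hv : Continuous fun w : (Fin N → ℝ) × ℝ => dil N m w.2 *ᵥ w.1 :=
    ((continuous_dil N m).comp continuous_snd).matrix_mulVec continuous_fst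
  have hq : Continuous fun w : (Fin N → ℝ) × ℝ =>
      ((Cmat N B (m 0) 1)⁻¹ *ᵥ (dil N m w.2 *ᵥ w.1)) ⬝ᵥ (dil N m w.2 *ᵥ w.1) :=
    (continuous_const.matrix_mulVec hv).dotProduct hv
  have hscale : ContinuousOn (fun z : (Fin N → ℝ) × ℝ => (z.1, 1 / Real.sqrt z.2))
      (Set.univ ×ˢ Set.Ioi 0) :=
    continuousOn_fst.prodMk (continuousOn_const.div (by fun_prop) fun z hz =>
      (Real.sqrt_pos.2 hz.2).ne')
  have hq' : ContinuousOn (fun z : (Fin N → ℝ) × ℝ =>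
      ((Cmat N B (m 0) 1)⁻¹ *ᵥ (dil N m (1 / Real.sqrt z.2) *ᵥ z.1)) ⬝ᵥ
        (dil N m (1 / Real.sqrt z.2) *ᵥ z.1)) (Set.univ ×ˢ Set.Ioi 0) :=
    by simpa only [Function.comp_def] using hq.comp_continuousOn hscale
  have hformula : ContinuousOn (fun z : (Fin N → ℝ) × ℝ => CN N B (m 0) * z.2 ^ (-(Q : ℝ) / 2) *
      Real.exp (-(1 / 4) * (((Cmat N B (m 0) 1)⁻¹ *ᵥ (dil N m (1 / Real.sqrt z.2) *ᵥ z.1)) ⬝ᵥ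
        (dil N m (1 / Real.sqrt z.2) *ᵥ z.1)))) (Set.univ ×ˢ Set.Ioi 0) :=
    (continuousOn_const.mul (continuousOn_snd.rpow_const fun _ hz =>
      Or.inl (Set.mem_Ioi.1 hz.2).ne')).mul
        (Real.continuous_exp.comp_continuousOn (continuousOn_const.mul hq'))
  exact hformula.congr fun z hz => Kker_of_pos hz.2 z.1

lemma aestronglyMeasurable_Kker_rpow {p : ℝ} (hp : 0 ≤ p) (T : ℝ) :
    AEStronglyMeasurable (fun z : (Fin N → ℝ) × ℝ => Kker N m B Q z.1 z.2 ^ p)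
      (volume.restrict (Set.univ ×ˢ Set.Ioo 0 T)) :=
  ((continuousOn_Kker.rpow_const fun _ _ => Or.inr hp).mono
    (Set.prod_mono le_rfl Set.Ioo_subset_Ioi_self)).aestronglyMeasurable
    (MeasurableSet.univ.prod measurableSet_Ioo)

lemma Kker_rpow_of_pos {t : ℝ} (ht : 0 < t) (p : ℝ) (x : Fin N → ℝ) :
    Kker N m B Q x t ^ p = CN N B (m 0) ^ p * t ^ (-(Q : ℝ) * p / 2) *
      Real.exp (-(p / 4 * (((Cmat N B (m 0) 1)⁻¹ *ᵥ (dil N m (1 / Real.sqrt t) *ᵥ x)) ⬝ᵥ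
        (dil N m (1 / Real.sqrt t) *ᵥ x)))) := by
  have hCN := CN_nonneg N B (m 0)
  rw [Kker_of_pos ht, Real.mul_rpow (by positivity) (Real.exp_pos _).le,
    Real.mul_rpow hCN (Real.rpow_nonneg ht.le _), ← Real.rpow_mul ht.le, ← Real.exp_mul]
  ring_nf

lemma integrable_Kker_rpow (hC : (Cmat N B (m 0) 1).PosDef) {p t : ℝ} (hp : 0 < p) (ht : 0 < t) :
    Integrable fun x => Kker N m B Q x t ^ p := by
  simp_rw [Kker_rpow_of_pos ht]
  refine Integrable.const_mul ?_ _
  exact (integrable_comp_mulVec_iff (det_dil_ne_zero N m (by positivity))).2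
    (hC.inv.integrable_exp_neg_mul_quadForm (by positivity))

lemma integral_Kker_rpow (hdil : ∀ r, (dil N m r).det = r ^ Q) {t : ℝ} (ht : 0 < t) (p : ℝ) :
    ∫ x, Kker N m B Q x t ^ p = CN N B (m 0) ^ p *
      (∫ v, Real.exp (-(p / 4 * (((Cmat N B (m 0) 1)⁻¹ *ᵥ v) ⬝ᵥ v)))) *
        t ^ ((Q : ℝ) * (1 - p) / 2) := by
  have hjac : |(dil N m (1 / Real.sqrt t)).det|⁻¹ = t ^ ((Q : ℝ) / 2) := by
    rw [hdil, abs_of_pos (by positivity), one_div, inv_pow, inv_inv, Real.sqrt_eq_rpow,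
      ← Real.rpow_natCast, ← Real.rpow_mul ht.le]
    ring_nf
  simp_rw [Kker_rpow_of_pos ht]
  rw [integral_const_mul, integral_comp_mulVec (det_dil_ne_zero N m (by positivity))
    fun v => Real.exp (-(p / 4 * (((Cmat N B (m 0) 1)⁻¹ *ᵥ v) ⬝ᵥ v))), hjac, smul_eq_mul,
    show (Q : ℝ) * (1 - p) / 2 = -(Q : ℝ) * p / 2 + Q / 2 by ring, Real.rpow_add ht]
  ring

end Kernel

-- Division by zero gives `(Q + 2) / Q = 0` for `Q = 0`, so the hypothesis `hpQ` also forces `0 < Q`.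
lemma neg_one_lt_mul_one_sub_div_two {Q : ℕ} {p : ℝ} (hp : 0 < p) (hpQ : p < ((Q : ℝ) + 2) / Q) :
    -1 < (Q : ℝ) * (1 - p) / 2 := by
  have hQ : 0 < (Q : ℝ) := by
    refine (Nat.cast_nonneg Q).lt_of_ne fun h => ?_
    rw [← h, div_zero] at hpQ
    linarith
  have := (lt_div_iff₀ hQ).1 hpQ
  linarith

theorem kernel_memLp_general (N κ : ℕ) (m : ℕ → ℕ) (B : Matrix (Fin N) (Fin N) ℝ) (Q : ℕ)
    (hsum : ∑ j ∈ Finset.range (κ + 1), m j = N)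
    (hQ : Q = ∑ j ∈ Finset.range (κ + 1), (2 * j + 1) * m j)
    (hC1 : (Cmat N B (m 0) 1).PosDef)
    (T : ℝ) (p : ℝ) (hp1 : 1 ≤ p) (hp2 : p < ((Q : ℝ) + 2) / Q) :
    IntegrableOn (fun z : (Fin N → ℝ) × ℝ => Kker N m B Q z.1 z.2 ^ p)
      (Set.univ ×ˢ Set.Ioo 0 T) volume := by
  have hp : 0 < p := by linarith
  have hdil : ∀ r, (dil N m r).det = r ^ Q := fun r => by
    rw [hQ, det_dil_of_blockSum_eq hsum]
  have hmeas := aestronglyMeasurable_Kker_rpow (m := m) (B := B) (Q := Q) hp.le T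
  unfold IntegrableOn
  rw [Measure.volume_eq_prod, ← Measure.prod_restrict, Measure.restrict_univ] at hmeas ⊢
  refine (integrable_prod_iff' hmeas).2 ⟨?_, ?_⟩
  · filter_upwards [ae_restrict_mem measurableSet_Ioo] with t ht
    exact integrable_Kker_rpow hC1 hp ht.1
  · have hpow : IntegrableOn (fun t : ℝ => t ^ ((Q : ℝ) * (1 - p) / 2)) (Set.Ioo 0 T) :=
      (intervalIntegral.intervalIntegrable_rpow'
        (neg_one_lt_mul_one_sub_div_two hp hp2)).def'.mono_set
          (Set.Ioo_subset_Ioc_self.trans Set.Ioc_subset_uIoc)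
    obtain ⟨c, hc⟩ : ∃ c, ∀ t, 0 < t →
        ∫ x, ‖Kker N m B Q x t ^ p‖ = c * t ^ ((Q : ℝ) * (1 - p) / 2) := ⟨_, fun t ht => by
      simp_rw [Real.norm_of_nonneg (Real.rpow_nonneg (Kker_nonneg _ t) p)]
      exact integral_Kker_rpow hdil ht p⟩
    exact IntegrableOn.congr_fun (hpow.const_mul c) (fun t ht => (hc t ht.1).symm)
      measurableSet_Ioo

/-- **Integrability of the fundamental solution, first part.**
For every `T > 0` and `1 ≤ p < p₀ = (Q+2)/Q`, the kernel `K` belongs to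
`L^p(ℝ^N × (0,T))`. -/
theorem kernel_memLp (N κ : ℕ) (m : ℕ → ℕ) (B : Matrix (Fin N) (Fin N) ℝ) (Q : ℕ)
    (hN : 2 ≤ N)
    (hmono : ∀ j, j < κ → m (j + 1) ≤ m j) (hm1 : ∀ j, j ≤ κ → 1 ≤ m j)
    (hsum : ∑ j ∈ Finset.range (κ + 1), m j = N)
    (hQ : Q = ∑ j ∈ Finset.range (κ + 1), (2 * j + 1) * m j)
    (hB : B.trace = 0) (hC1 : (Cmat N B (m 0) 1).PosDef)
    (T : ℝ) (hT : 0 < T) (p : ℝ) (hp1 : 1 ≤ p) (hp2 : p < ((Q : ℝ) + 2) / Q) :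
    IntegrableOn (fun z : (Fin N → ℝ) × ℝ => Kker N m B Q z.1 z.2 ^ p)
      (Set.univ ×ˢ Set.Ioo 0 T) volume :=
  kernel_memLp_general N κ m B Q hsum hQ hC1 T p hp1 hp2

end
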